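/- arXiv:math/0502223 — 8 statements merged into one kernel-verified Lean document; each statement's English description precedes it below -/
import Mathlib

section
/- Every g-closed subgroup of a compact Hausdorff abelian group is realcompact (as a topological space with the subspace topology). -/
open Filter Topology Set

/-- `s_u(K)`: elements annihilated by the sequence `u` of characters. -/
def sSeq (K : Type) [Monoid K] [TopologicalSpace K] (u : ℕ → PontryaginDual K) : Set K :=
  {x : K | Filter.Tendsto (fun n => u n x) Filter.atTop (nhds 1)}

/-- The `g`-closure of a subgroup. -/
def gCl (K : Type) [Monoid K] [TopologicalSpace K] (H : Set K) : Set K :=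
  ⋂₀ {S : Set K | ∃ u : ℕ → PontryaginDual K, S = sSeq K u ∧ H ⊆ sSeq K u}

/-- Realcompactness: homeomorphic to a closed subspace of a power of `ℝ`. -/
def RealCompact (X : Type) [TopologicalSpace X] : Prop :=
  ∃ (ι : Type) (f : X → ι → ℝ), IsClosedEmbedding f

/-- From a character sequence `u` whose null set misses `p`, build a continuous real
function vanishing at `p` and positive on `sSeq K u`. -/
lemma exists_sep (K : Type) [Monoid K] [TopologicalSpace K]
    (u : ℕ → PontryaginDual K) (p : K) (hp : p ∉ sSeq K u) :
    ∃ G : C(K, ℝ), G p = 0 ∧ ∀ x ∈ sSeq K u, 0 < G x := by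
  have hnt : ¬ Filter.Tendsto (fun n => u n p) Filter.atTop (nhds 1) := hp
  rw [Metric.tendsto_atTop] at hnt
  push_neg at hnt
  obtain ⟨ε, hε, hfreq⟩ := hnt
  classical
  set F : ℕ → K → ℝ := fun n x =>
    (if ε ≤ dist (u n p) 1 then (1:ℝ) else 0) * ((1/2:ℝ)^n * max 0 (ε - dist (u n x) 1))
    with hF
  have hFcont : ∀ n, Continuous (F n) := by
    intro n
    exact continuous_const.mul (continuous_const.mul (continuous_const.max
      (continuous_const.sub ((map_continuous (u n)).dist continuous_const))))
  have hFnonneg : ∀ n x, 0 ≤ F n x := by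
    intro n x
    have h1 : (0:ℝ) ≤ (if ε ≤ dist (u n p) 1 then (1:ℝ) else 0) := by positivity
    have h2 : (0:ℝ) ≤ (1/2:ℝ)^n * max 0 (ε - dist (u n x) 1) := by positivity
    exact mul_nonneg h1 h2
  have hFle : ∀ n x, ‖F n x‖ ≤ (1/2:ℝ)^n * ε := by
    intro n x
    rw [Real.norm_eq_abs, abs_of_nonneg (hFnonneg n x)]
    have h1 : (if ε ≤ dist (u n p) 1 then (1:ℝ) else 0) ≤ 1 := by
      split <;> norm_num
    have h2 : max 0 (ε - dist (u n x) 1) ≤ ε :=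
      max_le hε.le (by linarith [dist_nonneg (x := u n x) (y := 1)])
    calc F n x ≤ 1 * ((1/2:ℝ)^n * max 0 (ε - dist (u n x) 1)) := by
          apply mul_le_mul_of_nonneg_right h1 (by positivity)
      _ = (1/2:ℝ)^n * max 0 (ε - dist (u n x) 1) := one_mul _
      _ ≤ (1/2:ℝ)^n * ε := by
          apply mul_le_mul_of_nonneg_left h2 (by positivity)
  have hsumb : Summable (fun n => (1/2:ℝ)^n * ε) :=
    (summable_geometric_of_lt_one (by norm_num) (by norm_num)).mul_right ε
  have hsumF : ∀ x : K, Summable (fun n => F n x) := by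
    intro x
    exact Summable.of_nonneg_of_le (fun n => hFnonneg n x)
      (fun n => (le_abs_self _).trans (hFle n x)) hsumb
  refine ⟨⟨fun x => ∑' n, F n x, continuous_tsum hFcont hsumb hFle⟩, ?_, ?_⟩
  · have hz : ∀ n, F n p = 0 := by
      intro n
      by_cases h : ε ≤ dist (u n p) 1
      · have : max 0 (ε - dist (u n p) 1) = 0 := max_eq_left (by linarith)
        simp [hF, h, this]
      · simp [hF, h]
    simp only [ContinuousMap.coe_mk]
    calc ∑' n, F n p = ∑' _ : ℕ, (0:ℝ) := tsum_congr hz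
      _ = 0 := tsum_zero
  · intro x hx
    have hx' : Filter.Tendsto (fun n => u n x) Filter.atTop (nhds 1) := hx
    rw [Metric.tendsto_atTop] at hx'
    obtain ⟨N, hN⟩ := hx' ε hε
    obtain ⟨n, hnN, hnp⟩ := hfreq N
    have hdx : dist (u n x) 1 < ε := hN n hnN
    have hpos : 0 < F n x := by
      have h1 : (if ε ≤ dist (u n p) 1 then (1:ℝ) else 0) = 1 := if_pos hnp
      have h2 : max 0 (ε - dist (u n x) 1) = ε - dist (u n x) 1 :=
        max_eq_right (by linarith)
      rw [hF]
      dsimp only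
      rw [h1, h2, one_mul]
      have : 0 < ε - dist (u n x) 1 := by linarith
      positivity
    simp only [ContinuousMap.coe_mk]
    exact Summable.tsum_pos (hsumF x) (fun i => hFnonneg i x) n hpos

theorem gClosed_realcompact (K : Type) [CommGroup K] [TopologicalSpace K]
    [IsTopologicalGroup K] [CompactSpace K] [T2Space K] (H : Subgroup K)
    (hg : gCl K (H : Set K) = (H : Set K)) :
    RealCompact ↥H := by
  classical
  -- index type: points outside H
  set J := {p : K // p ∉ (H : Set K)} with hJ
  have hsep : ∀ j : J, ∃ G : C(K, ℝ), G j.1 = 0 ∧ ∀ x ∈ (H : Set K), 0 < G x := by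
    rintro ⟨p, hp⟩
    have hp' : p ∉ gCl K (H : Set K) := by rw [hg]; exact hp
    simp only [gCl, Set.mem_sInter, Set.mem_setOf_eq, not_forall] at hp'
    obtain ⟨S, ⟨u, rfl, hu⟩, hpS⟩ := hp'
    obtain ⟨G, hG0, hGpos⟩ := exists_sep K u p hpS
    exact ⟨G, hG0, fun x hx => hGpos x (hu hx)⟩
  choose G hG0 hGpos using hsep
  -- evaluation embedding of K into ℝ^{C(K,ℝ)}
  set e : K → (C(K, ℝ) → ℝ) := fun x φ => φ x with he
  have hecont : Continuous e := continuous_pi fun φ => φ.continuous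
  have heinj : Function.Injective e := by
    intro x y hxy
    by_contra hne
    obtain ⟨f, hf0, hf1, -⟩ := exists_continuous_zero_one_of_isClosed
      (isClosed_singleton (x := x)) (isClosed_singleton (x := y))
      (Set.disjoint_singleton.mpr hne)
    have hx0 : f x = 0 := hf0 rfl
    have hy1 : f y = 1 := hf1 rfl
    have : f x = f y := congrFun hxy f
    rw [hx0, hy1] at this
    norm_num at this
  have hce : IsClosedEmbedding e := hecont.isClosedEmbedding heinj
  refine ⟨C(K, ℝ) ⊕ J, fun x i => Sum.elim (fun φ => φ (x : K)) (fun j => (G j (x : K))⁻¹) i, ?_⟩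
  set f : ↥H → (C(K, ℝ) ⊕ J) → ℝ :=
    fun x i => Sum.elim (fun φ => φ (x : K)) (fun j => (G j (x : K))⁻¹) i with hf
  have hGne : ∀ (j : J) (x : ↥H), G j (x : K) ≠ 0 := fun j x => (hGpos j x x.2).ne'
  have hfcont : Continuous f := by
    apply continuous_pi
    rintro (φ | j)
    · exact φ.continuous.comp continuous_subtype_val
    · exact (((G j).continuous).comp continuous_subtype_val).inv₀ fun x => hGne j x
  have hproj : Continuous fun y : (C(K, ℝ) ⊕ J) → ℝ => (fun φ => y (Sum.inl φ)) :=
    continuous_pi fun φ => continuous_apply _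
  have hcomp : (fun y : (C(K, ℝ) ⊕ J) → ℝ => (fun φ => y (Sum.inl φ))) ∘ f
      = e ∘ (Subtype.val : ↥H → K) := rfl
  have hemb : IsEmbedding f := by
    apply IsEmbedding.of_comp hfcont hproj
    rw [hcomp]
    exact hce.isEmbedding.comp IsEmbedding.subtypeVal
  -- the range of f
  set T : Set ((C(K, ℝ) ⊕ J) → ℝ) :=
    {y | (fun φ => y (Sum.inl φ)) ∈ Set.range e ∧
      ∀ j : J, y (Sum.inr j) * y (Sum.inl (G j)) = 1} with hT
  have hTclosed : IsClosed T := by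
    apply IsClosed.inter
    · exact hce.isClosed_range.preimage hproj
    · show IsClosed {y : (C(K, ℝ) ⊕ J) → ℝ | ∀ j : J, y (Sum.inr j) * y (Sum.inl (G j)) = 1}
      have : {y : (C(K, ℝ) ⊕ J) → ℝ | ∀ j : J, y (Sum.inr j) * y (Sum.inl (G j)) = 1}
          = ⋂ j : J, {y | y (Sum.inr j) * y (Sum.inl (G j)) = 1} := by
        ext y; simp
      rw [this]
      exact isClosed_iInter fun j =>
        isClosed_eq ((continuous_apply (Sum.inr j)).mul (continuous_apply (Sum.inl (G j)))) continuous_const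
  have hrange : Set.range f = T := by
    ext y
    constructor
    · rintro ⟨x, rfl⟩
      refine ⟨⟨(x : K), rfl⟩, fun j => ?_⟩
      simp only [hf, Sum.elim_inl, Sum.elim_inr]
      exact inv_mul_cancel₀ (hGne j x)
    · rintro ⟨⟨x, hx⟩, hy2⟩
      have hxcoord : ∀ φ : C(K, ℝ), y (Sum.inl φ) = φ x := fun φ => (congrFun hx φ).symm
      have hxH : x ∈ (H : Set K) := by
        by_contra hxH
        have h := hy2 ⟨x, hxH⟩
        rw [hxcoord, hG0 ⟨x, hxH⟩, mul_zero] at h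
        norm_num at h
      refine ⟨⟨x, hxH⟩, ?_⟩
      funext i
      rcases i with φ | j
      · simp only [hf, Sum.elim_inl]
        exact (hxcoord φ).symm
      · simp only [hf, Sum.elim_inr]
        have h := hy2 j
        rw [hxcoord] at h
        exact (eq_inv_of_mul_eq_one_left h).symm
  exact ⟨hemb, hrange ▸ hTclosed⟩
end

section
/- For an abelian topological group G, the following are equivalent: (i) G is maximally almost periodic (continuous characters separate points); (ii) every countable subgroup of G is g-closed in G; (iii) every cyclic subgroup of G is g-closed in G. -/
open Filter Topology Set

open MeasureTheory


noncomputable instance : MeasurableSpace Circle := borel Circle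
instance : BorelSpace Circle := ⟨rfl⟩

namespace GClosed

set_option linter.unusedSectionVars false

variable {C : Type} [Countable C]

/-- The monomial function `z ↦ ∏ c, (z c) ^ v c` as a continuous map `(C → Circle) → ℂ`. -/
noncomputable def mono (v : C →₀ ℤ) : C((C → Circle), ℂ) where
  toFun z := ((v.prod fun c k => z c ^ k : Circle) : ℂ)
  continuous_toFun := by
    refine Continuous.comp (g := ((↑) : Circle → ℂ)) continuous_subtype_val
      (?_ : Continuous fun z : C → Circle => (v.prod fun c k => z c ^ k : Circle))
    apply continuous_finset_prod
    intro c _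
    exact (continuous_apply c).zpow _

lemma mono_apply (v : C →₀ ℤ) (z : C → Circle) :
    mono v z = ((v.prod fun c k => z c ^ k : Circle) : ℂ) := rfl

lemma mono_mul_apply (v : C →₀ ℤ) (a b : C → Circle) :
    mono v (a * b) = mono v a * mono v b := by
  simp only [mono_apply]
  rw [← Circle.coe_mul, ← Finsupp.prod_mul]
  congr 1
  apply Finsupp.prod_congr
  intro c _
  simp [mul_zpow]
  rfl

lemma mono_zero : (mono (0 : C →₀ ℤ)) = 1 := by
  ext z
  simp [mono_apply]

lemma mono_add (v w : C →₀ ℤ) : mono (v + w) = mono v * mono w := by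
  ext z
  simp only [mono_apply, ContinuousMap.mul_apply, ← Circle.coe_mul]
  congr 1
  apply Finsupp.prod_add_index' (by simp; intro _; rfl) (by intro c a b; simp [zpow_add]; rfl)

lemma mono_neg (v : C →₀ ℤ) : mono (-v) = star (mono v) := by
  ext z
  simp only [mono_apply, ContinuousMap.star_apply]
  rw [RCLike.star_def, ← Circle.coe_inv_eq_conj]
  congr 1
  rw [Finsupp.prod, Finsupp.prod, Finsupp.support_neg, ← Finset.prod_inv_distrib]
  exact Finset.prod_congr rfl (fun c _ => by simp [zpow_neg]; rfl)

end GClosed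

namespace GClosed

variable {C : Type} [Countable C]

set_option linter.unusedSectionVars false

lemma cont_integrable {X : Type} [TopologicalSpace X] [CompactSpace X] [MeasurableSpace X]
    [OpensMeasurableSpace X] (μ : MeasureTheory.Measure X) [IsFiniteMeasure μ] {f : X → ℂ}
    (hf : Continuous f) : Integrable f μ := by
  apply hf.integrable_of_hasCompactSupport
  exact (isClosed_tsupport f).isCompact

lemma continuous_integral_comp {X : Type} [TopologicalSpace X] [CompactSpace X] [MeasurableSpace X]
    [OpensMeasurableSpace X] (μ : MeasureTheory.Measure X) [IsFiniteMeasure μ] {w : X → X}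
    (hw : Continuous w) : Continuous fun g : C(X, ℂ) => ∫ z, g (w z) ∂μ := by
  apply (LipschitzWith.of_dist_le_mul (K := (μ Set.univ).toNNReal) ?_).continuous
  intro g h
  rw [dist_eq_norm, ← integral_sub
    (show Integrable (fun z => g (w z)) μ from cont_integrable μ (g.continuous.comp hw))
    (show Integrable (fun z => h (w z)) μ from cont_integrable μ (h.continuous.comp hw))]
  have hb : ∀ z, ‖g (w z) - h (w z)‖ ≤ dist g h := by
    intro z
    rw [← dist_eq_norm]
    exact ContinuousMap.dist_apply_le_dist (w z)
  calc ‖∫ z, (g (w z) - h (w z)) ∂μ‖ ≤ dist g h * (μ Set.univ).toReal :=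
        norm_integral_le_of_norm_le_const (Eventually.of_forall hb)
    _ = (μ Set.univ).toNNReal * dist g h := by
        rw [mul_comm]; rfl

lemma mono_single (c : C) (z : C → Circle) : mono (Finsupp.single c 1) z = z c := by
  rw [mono_apply, Finsupp.prod_single_index (by simp)]
  simp

theorem mem_closure_of_forall_mono (D : Subgroup (C → Circle)) (p : C → Circle)
    (hp : ∀ v : C →₀ ℤ, (∀ q ∈ D, mono v q = 1) → mono v p = 1) :
    p ∈ closure (D : Set (C → Circle)) := by
  by_contra hpc
  let K : Subgroup (C → Circle) := D.topologicalClosure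
  have hKcoe : (K : Set (C → Circle)) = closure (D : Set (C → Circle)) :=
    Subgroup.topologicalClosure_coe
  have hKc : IsClosed (K : Set (C → Circle)) := by
    rw [hKcoe]; exact isClosed_closure
  haveI : CompactSpace K := isCompact_iff_compactSpace.mp hKc.isCompact
  haveI : BorelSpace K := Subtype.borelSpace (K : Set (C → Circle))
  let ν : Measure K := Measure.haar
  let μ : Measure (C → Circle) := ν.map Subtype.val
  haveI : IsFiniteMeasure ν := CompactSpace.isFiniteMeasure
  haveI : IsFiniteMeasure μ := by
    constructor
    rw [Measure.map_apply measurable_subtype_coe MeasurableSet.univ]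
    exact measure_lt_top ν _
  have hmapint : ∀ f : (C → Circle) → ℂ, Continuous f →
      ∫ z, f z ∂μ = ∫ y : K, f ((y : K) : C → Circle) ∂ν := fun f hf =>
    integral_map measurable_subtype_coe.aemeasurable hf.aestronglyMeasurable
  -- Equality of the two integrals on monomials
  have hmono : ∀ v : C →₀ ℤ, ∫ z, mono v (p * z) ∂μ = ∫ z, mono v z ∂μ := by
    intro v
    by_cases hD : ∀ q ∈ D, mono v q = 1
    · have hp1 := hp v hD
      apply integral_congr_ae (Eventually.of_forall ?_)
      intro z
      rw [mono_mul_apply, hp1, one_mul]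
    · push_neg at hD
      obtain ⟨q₀, hq₀D, hq₀⟩ := hD
      have hRHS : ∫ z, mono v z ∂μ = 0 := by
        rw [hmapint _ (mono v).continuous]
        have hinv := integral_mul_left_eq_self (μ := ν)
          (fun y : K => mono v ((y : K) : C → Circle)) ⟨q₀, D.le_topologicalClosure hq₀D⟩
        have h2 : ∫ y : K, mono v ((((⟨q₀, D.le_topologicalClosure hq₀D⟩ : K) * y : K)) : C → Circle) ∂ν
            = mono v q₀ * ∫ y : K, mono v ((y : K) : C → Circle) ∂ν := by
          rw [← integral_const_mul]
          apply integral_congr_ae (Eventually.of_forall ?_)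
          intro y
          rw [← mono_mul_apply]
          rfl
        rw [h2] at hinv
        have h0 : (mono v q₀ - 1) * ∫ y : K, mono v ((y : K) : C → Circle) ∂ν = 0 := by
          linear_combination hinv
        rcases mul_eq_zero.mp h0 with h | h
        · exact absurd (by linear_combination h) hq₀
        · exact h
      have hLHS : ∫ z, mono v (p * z) ∂μ = mono v p * ∫ z, mono v z ∂μ := by
        rw [← integral_const_mul]
        apply integral_congr_ae (Eventually.of_forall ?_)
        intro z
        rw [mono_mul_apply]
      rw [hLHS, hRHS, mul_zero]
  -- the set of functions with equal integrals is closed and contains the span of monomials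
  set S : Set C((C → Circle), ℂ) := {g | ∫ z, g (p * z) ∂μ = ∫ z, g z ∂μ} with hS
  have hSclosed : IsClosed S :=
    isClosed_eq (continuous_integral_comp μ (continuous_const.mul continuous_id))
      (continuous_integral_comp μ continuous_id)
  set W : Submodule ℂ C((C → Circle), ℂ) :=
    Submodule.span ℂ (Set.range (mono : (C →₀ ℤ) → C((C → Circle), ℂ))) with hW
  have hWS : (W : Set C((C → Circle), ℂ)) ⊆ S := by
    intro g hg
    induction hg using Submodule.span_induction with
    | mem g hg =>
        obtain ⟨v, rfl⟩ := hg
        exact hmono v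
    | zero => simp [hS]
    | add g h _ _ hg hh =>
        simp only [hS, mem_setOf_eq, ContinuousMap.add_apply] at hg hh ⊢
        have cg : Continuous fun z => g (p * z) := g.continuous.comp (continuous_const.mul continuous_id)
        have ch : Continuous fun z => h (p * z) := h.continuous.comp (continuous_const.mul continuous_id)
        rw [integral_add (cont_integrable μ cg) (cont_integrable μ ch),
          integral_add (cont_integrable μ g.continuous) (cont_integrable μ h.continuous), hg, hh]
    | smul c g _ hg =>
        simp only [hS, mem_setOf_eq, ContinuousMap.smul_apply] at hg ⊢
        rw [integral_smul, integral_smul, hg]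
  -- Stone-Weierstrass: W is dense
  have hmul : ∀ g ∈ W, ∀ h ∈ W, g * h ∈ W := by
    intro g hg h hh
    have h1 : W * W ≤ W := by
      rw [hW, Submodule.span_mul_span]
      apply Submodule.span_le.mpr
      rintro f ⟨g', ⟨v, rfl⟩, h', ⟨w', rfl⟩, rfl⟩
      exact Submodule.subset_span ⟨v + w', by rw [mono_add]⟩
    exact h1 (Submodule.mul_mem_mul hg hh)
  have hstar : ∀ g ∈ W, star g ∈ W := by
    intro g hg
    induction hg using Submodule.span_induction with
    | mem g hg =>
        obtain ⟨v, rfl⟩ := hg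
        exact Submodule.subset_span ⟨-v, mono_neg v⟩
    | zero => simpa using W.zero_mem
    | add g h _ _ hg hh => rw [star_add]; exact W.add_mem hg hh
    | smul c g _ hg => rw [star_smul]; exact W.smul_mem _ hg
  set A : StarSubalgebra ℂ C((C → Circle), ℂ) :=
    StarAlgebra.adjoin ℂ (Set.range fun c : C => mono (Finsupp.single c 1)) with hA
  have hAW : (A : Set C((C → Circle), ℂ)) ⊆ W := by
    intro g hg
    rw [hA] at hg
    induction hg using StarAlgebra.adjoin_induction with
    | mem g hg =>
        obtain ⟨c, rfl⟩ := hg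
        exact Submodule.subset_span ⟨_, rfl⟩
    | algebraMap r =>
        rw [Algebra.algebraMap_eq_smul_one]
        exact W.smul_mem _ (Submodule.subset_span ⟨0, mono_zero⟩)
    | add g h _ _ hg hh => exact W.add_mem hg hh
    | mul g h _ _ hg hh => exact hmul g hg h hh
    | star g _ hg => exact hstar g hg
  have hAsep : A.SeparatesPoints := by
    intro z w hzw
    obtain ⟨c, hc⟩ : ∃ c, z c ≠ w c := Function.ne_iff.mp hzw
    refine ⟨_, ⟨mono (Finsupp.single c 1), ?_, rfl⟩, ?_⟩
    · exact StarAlgebra.subset_adjoin ℂ _ ⟨c, rfl⟩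
    · simp only [mono_single]
      exact fun h => hc (Circle.coe_injective h)
  have hAdense : closure (A : Set C((C → Circle), ℂ)) = Set.univ := by
    have := ContinuousMap.starSubalgebra_topologicalClosure_eq_top_of_separatesPoints A hAsep
    have h2 : (A.topologicalClosure : Set C((C → Circle), ℂ)) = (⊤ : StarSubalgebra ℂ C((C → Circle), ℂ)) := by
      rw [this]
    simpa [StarSubalgebra.topologicalClosure_coe] using h2
  have hall : ∀ g : C((C → Circle), ℂ), g ∈ S := by
    have h1 : closure (A : Set C((C → Circle), ℂ)) ⊆ closure (W : Set _) :=
      closure_mono hAW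
    have h2 : closure (W : Set C((C → Circle), ℂ)) ⊆ S := closure_minimal hWS hSclosed
    intro g
    exact h2 (h1 (hAdense ▸ Set.mem_univ g))
  -- Urysohn function: 1 on K, 0 on p • K
  have hpK : IsClosed ((fun z => p * z) '' (K : Set (C → Circle))) :=
    (Homeomorph.mulLeft p).isClosedMap _ hKc
  have hdisj : Disjoint ((fun z => p * z) '' (K : Set (C → Circle))) (K : Set (C → Circle)) := by
    rw [Set.disjoint_left]
    rintro _ ⟨k, hk, rfl⟩ hpk
    apply hpc
    rw [← hKcoe]
    have : p = (p * k) * k⁻¹ := by group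
    rw [this]
    exact K.mul_mem hpk (K.inv_mem hk)
  obtain ⟨f, hf0, hf1, -⟩ := exists_continuous_zero_one_of_isClosed hpK hKc hdisj
  let fc : C((C → Circle), ℂ) := ⟨fun z => (f z : ℂ), Complex.continuous_ofReal.comp f.continuous⟩
  have hfc := hall fc
  rw [hS, Set.mem_setOf_eq] at hfc
  have hI0 : ∫ z, fc (p * z) ∂μ = 0 := by
    rw [hmapint (fun z => fc (p * z))
      (fc.continuous.comp (continuous_const.mul continuous_id))]
    have heq : ∀ y : K, fc (p * ((y : K) : C → Circle)) = 0 := by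
      intro y
      have h0 : f (p * ((y : K) : C → Circle)) = 0 := hf0 ⟨_, y.2, rfl⟩
      simp only [fc, ContinuousMap.coe_mk]
      rw [h0]
      simp
    calc ∫ y : K, fc (p * ((y : K) : C → Circle)) ∂ν
        = ∫ _ : K, (0 : ℂ) ∂ν := integral_congr_ae (Eventually.of_forall heq)
      _ = 0 := integral_zero _ _
  have hI1 : ∫ z, fc z ∂μ = ((ν Set.univ).toReal : ℂ) := by
    rw [hmapint fc fc.continuous]
    have heq : ∀ y : K, fc ((y : K) : C → Circle) = 1 := by
      intro y
      have h1 : f ((y : K) : C → Circle) = 1 := hf1 y.2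
      simp only [fc, ContinuousMap.coe_mk]
      rw [h1]
      simp
    calc ∫ y : K, fc ((y : K) : C → Circle) ∂ν
        = ∫ _ : K, (1 : ℂ) ∂ν := integral_congr_ae (Eventually.of_forall heq)
      _ = ((ν Set.univ).toReal : ℂ) := by rw [integral_const]; simp [Measure.real]
  rw [hI0, hI1] at hfc
  have htr : (ν Set.univ).toReal = 0 := by exact_mod_cast hfc.symm
  have hpos : 0 < (ν Set.univ).toReal :=
    ENNReal.toReal_pos (isOpen_univ.measure_pos ν ⟨1, trivial⟩).ne' (measure_ne_top ν _)
  exact absurd htr hpos.ne'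

end GClosed

namespace GClosed

lemma circle_coe_zpow (z : Circle) (k : ℤ) : ((z ^ k : Circle) : ℂ) = (z : ℂ) ^ k := by
  have h1 : ((z ^ k : Circle) : ℂ) = ((Circle.toUnits z ^ k : ℂˣ) : ℂ) := by
    rw [← map_zpow Circle.toUnits z k]
    rfl
  rw [h1, Units.val_zpow_eq_zpow_val]
  rfl

lemma circle_exp_zpow (r : ℝ) (k : ℤ) : Circle.exp r ^ k = Circle.exp (k * r) := by
  apply Circle.coe_injective
  rw [circle_coe_zpow, Circle.coe_exp, Circle.coe_exp, ← Complex.exp_int_mul]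
  congr 1
  push_cast
  ring

section Bridge

variable {G : Type} [CommGroup G] [TopologicalSpace G] [IsTopologicalGroup G]

theorem exists_annihilating_seq
    (hmap : ∀ y : G, y ≠ 1 → ∃ χ : PontryaginDual G, χ y ≠ 1)
    (H : Subgroup G) (hc : (H : Set G).Countable) {x : G} (hx : x ∉ H) :
    ∃ u : ℕ → PontryaginDual G,
      (∀ a ∈ H, Tendsto (fun n => u n a) atTop (nhds (1 : Circle))) ∧
      ¬ Tendsto (fun n => u n x) atTop (nhds (1 : Circle)) := by
  haveI : Countable (H : Set G) := hc.to_subtype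
  set C := Option ((H : Set G) : Type) with hC
  let emb : C → G := fun c => Option.elim c x Subtype.val
  let Φ : PontryaginDual G →* (C → Circle) :=
    { toFun := fun χ c => χ (emb c)
      map_one' := rfl
      map_mul' := fun χ ψ => rfl }
  -- the subgroup of integers k with x ^ k ∈ H
  let L : AddSubgroup ℤ :=
    { carrier := {k : ℤ | x ^ k ∈ H}
      zero_mem' := by
        simp only [Set.mem_setOf_eq, zpow_zero]
        exact H.one_mem
      add_mem' := by
        intro a b ha hb
        simp only [Set.mem_setOf_eq, zpow_add] at *
        exact H.mul_mem ha hb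
      neg_mem' := by
        intro a ha
        simp only [Set.mem_setOf_eq, zpow_neg] at *
        exact H.inv_mem ha }
  obtain ⟨d, hdL⟩ := Int.subgroup_cyclic L
  have hmemL : ∀ k : ℤ, x ^ k ∈ H ↔ d ∣ k := by
    intro k
    have hLk : (k ∈ L) = (k ∈ AddSubgroup.closure {d}) := by rw [hdL]
    rw [show (x ^ k ∈ H) = (k ∈ L) from rfl, hLk, AddSubgroup.mem_closure_singleton]
    constructor
    · rintro ⟨n, rfl⟩
      exact ⟨n, by rw [zsmul_eq_mul]; push_cast; ring⟩
    · rintro ⟨n, rfl⟩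
      exact ⟨n, by rw [zsmul_eq_mul]; push_cast; ring⟩
  have hd1 : ¬ ((d : ℤ) ∣ 1) := by
    intro h
    exact hx (by simpa using (hmemL 1).mpr h)
  -- choice of the target circle value s
  obtain ⟨s, hs1, hsd⟩ : ∃ s : Circle, s ≠ 1 ∧ ∀ k : ℤ, d ∣ k → s ^ k = 1 := by
    rcases eq_or_ne d 0 with rfl | hd0
    · refine ⟨Circle.exp Real.pi, ?_, ?_⟩
      · intro h
        obtain ⟨n, hn⟩ := Circle.exp_eq_one.mp h
        have h2 : ((2 * n - 1 : ℤ) : ℝ) * Real.pi = 0 := by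
          push_cast
          linear_combination (-1 : ℝ) * hn
        rcases mul_eq_zero.mp h2 with h3 | h3
        · have : (2 * n - 1 : ℤ) = 0 := by exact_mod_cast h3
          omega
        · exact Real.pi_ne_zero h3
      · intro k hk
        obtain rfl : k = 0 := by simpa using hk
        simp
    · refine ⟨Circle.exp (2 * Real.pi / d), ?_, ?_⟩
      · intro h
        obtain ⟨n, hn⟩ := Circle.exp_eq_one.mp h
        have hdR : (d : ℝ) ≠ 0 := Int.cast_ne_zero.mpr hd0
        have h2 : ((n * d - 1 : ℤ) : ℝ) * (2 * Real.pi) = 0 := by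
          have h2' : 2 * Real.pi / d * d = n * (2 * Real.pi) * d := by rw [hn]
          rw [div_mul_cancel₀ _ hdR] at h2'
          push_cast
          linear_combination (-1 : ℝ) * h2'
        rcases mul_eq_zero.mp h2 with h3 | h3
        · have h4 : (n * d - 1 : ℤ) = 0 := by exact_mod_cast h3
          have h5 : n * d = 1 := by omega
          exact hd1 ⟨n, by rw [← h5]; ring⟩
        · have := Real.pi_ne_zero
          have h5 : Real.pi = 0 := by linarith
          exact Real.pi_ne_zero h5
      · rintro k ⟨m, rfl⟩
        rw [zpow_mul, circle_exp_zpow]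
        have hdR : (d : ℝ) ≠ 0 := Int.cast_ne_zero.mpr hd0
        have hcan : (d : ℝ) * (2 * Real.pi / d) = 2 * Real.pi := by
          field_simp
        rw [hcan]
        have h1 : Circle.exp (2 * Real.pi) = 1 := Circle.exp_eq_one.mpr ⟨1, by ring⟩
        rw [h1, one_zpow]
  let p : C → Circle := fun c => Option.elim c s (fun _ => 1)
  -- verify the relation hypothesis
  have hp : ∀ v : C →₀ ℤ, (∀ q ∈ Φ.range, mono v q = 1) → mono v p = 1 := by
    intro v hv
    have hg : (v.prod fun c k => emb c ^ k) = 1 := by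
      by_contra hne
      obtain ⟨χ, hχ⟩ := hmap _ hne
      have h1 := hv (Φ χ) ⟨χ, rfl⟩
      apply hχ
      have h2 : χ (v.prod fun c k => emb c ^ k) = v.prod fun c k => χ (emb c) ^ k := by
        rw [map_finsuppProd]
        exact Finsupp.prod_congr fun c _ => map_zpow χ (emb c) (v c)
      rw [mono_apply] at h1
      rw [h2]
      exact Circle.coe_eq_one.mp h1
    -- project to the quotient by H
    have hq : x ^ (v none) ∈ H := by
      let π := QuotientGroup.mk' H
      have hsome : ∀ a : (H : Set G), π (emb (some a) ^ v (some a)) = 1 := by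
        intro a
        rw [map_zpow]
        have ha : π (emb (some a)) = 1 := (QuotientGroup.eq_one_iff _).mpr a.2
        rw [ha, one_zpow]
      have h4 : π (v.prod fun c k => emb c ^ k) = (π x) ^ (v none) := by
        rw [map_finsuppProd, Finsupp.prod]
        rcases em (none ∈ v.support) with hn | hn
        · rw [Finset.prod_eq_single_of_mem none hn
            (by rintro (_ | a) hb hne
                · exact absurd rfl hne
                · exact hsome a), map_zpow]
          rfl
        · have hv0 : v none = 0 := Finsupp.notMem_support_iff.mp hn
          rw [hv0, zpow_zero]
          apply Finset.prod_eq_one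
          rintro (_ | a) hb
          · exact absurd hb hn
          · exact hsome a
      rw [hg, map_one] at h4
      rw [← QuotientGroup.eq_one_iff (x ^ v none), QuotientGroup.mk_zpow]
      exact h4.symm
    have hs : s ^ (v none) = 1 := hsd _ ((hmemL _).mp hq)
    -- compute mono v p
    rw [mono_apply]
    have h5 : (v.prod fun c k => p c ^ k) = s ^ (v none) := by
      rw [Finsupp.prod]
      rcases em (none ∈ v.support) with hn | hn
      · rw [Finset.prod_eq_single_of_mem none hn
          (by rintro (_ | a) hb hne
              · exact absurd rfl hne
              · exact one_zpow _)]
        rfl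
      · have hv0 : v none = 0 := Finsupp.notMem_support_iff.mp hn
        rw [hv0, zpow_zero]
        apply Finset.prod_eq_one
        rintro (_ | a) hb
        · exact absurd hb hn
        · show (1 : Circle) ^ _ = 1
          rw [one_zpow]
    rw [h5, hs]
    rfl
  -- apply the closure theorem and extract a sequence
  have hmem := mem_closure_of_forall_mono Φ.range p hp
  obtain ⟨q, hqD, hqlim⟩ := mem_closure_iff_seq_limit.mp hmem
  choose χn hχn using hqD
  refine ⟨χn, ?_, ?_⟩
  · intro a ha
    have h6 : Tendsto (fun n => q n (some ⟨a, ha⟩)) atTop (nhds (p (some ⟨a, ha⟩))) :=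
      ((continuous_apply (some ⟨a, ha⟩ : C)).continuousAt.tendsto).comp hqlim
    have h7 : (fun n => χn n a) = fun n => q n (some ⟨a, ha⟩) := by
      funext n
      rw [← hχn n]
      rfl
    rw [h7]
    exact h6
  · intro hT
    have h6 : Tendsto (fun n => q n none) atTop (nhds (p none)) :=
      ((continuous_apply (none : C)).continuousAt.tendsto).comp hqlim
    have h7 : (fun n => χn n x) = fun n => q n none := by
      funext n
      rw [← hχn n]
      rfl
    rw [h7] at hT
    exact hs1 (tendsto_nhds_unique h6 hT)

end Bridge

end GClosed


namespace GClosed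

variable {G : Type} [CommGroup G] [TopologicalSpace G] [IsTopologicalGroup G]

lemma subset_gCl (H : Set G) : H ⊆ gCl G H := by
  intro y hy
  rw [gCl, Set.mem_sInter]
  rintro S ⟨u, rfl, hsub⟩
  exact hsub hy

theorem gClosed_of_map (hmap : ∀ y : G, y ≠ 1 → ∃ χ : PontryaginDual G, χ y ≠ 1)
    (H : Subgroup G) (hc : (H : Set G).Countable) : gCl G (H : Set G) = (H : Set G) := by
  apply subset_antisymm ?_ (subset_gCl _)
  intro y hy
  by_contra hyH
  obtain ⟨u, hu1, hu2⟩ := exists_annihilating_seq hmap H hc hyH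
  have hsub : (H : Set G) ⊆ sSeq G u := fun a ha => hu1 a ha
  have hy2 : y ∈ sSeq G u := by
    rw [gCl, Set.mem_sInter] at hy
    exact hy (sSeq G u) ⟨u, rfl, hsub⟩
  exact hu2 hy2

theorem map_of_bot_gClosed
    (h : gCl G ((⊥ : Subgroup G) : Set G) = ((⊥ : Subgroup G) : Set G)) :
    ∀ y : G, y ≠ 1 → ∃ χ : PontryaginDual G, χ y ≠ 1 := by
  intro y hy
  by_contra hno
  push_neg at hno
  have hy2 : y ∈ gCl G ((⊥ : Subgroup G) : Set G) := by
    rw [gCl, Set.mem_sInter]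
    rintro S ⟨u, rfl, hsub⟩
    show Tendsto (fun n => u n y) atTop (nhds 1)
    have : (fun n => u n y) = fun _ => (1 : Circle) := by
      funext n
      exact hno (u n)
    rw [this]
    exact tendsto_const_nhds
  rw [h] at hy2
  simp only [Subgroup.coe_bot, Set.mem_singleton_iff] at hy2
  exact hy hy2

lemma zpowers_countable (x : G) : ((Subgroup.zpowers x : Subgroup G) : Set G).Countable := by
  apply Set.Countable.mono ?_ (Set.countable_range fun n : ℤ => x ^ n)
  intro y hy
  obtain ⟨n, hn⟩ := Subgroup.mem_zpowers_iff.mp hy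
  exact ⟨n, hn⟩

lemma bot_countable : (((⊥ : Subgroup G) : Set G)).Countable := by
  rw [Subgroup.coe_bot]
  exact Set.countable_singleton 1

end GClosed

theorem map_iff_gClosed (G : Type) [CommGroup G] [TopologicalSpace G] [IsTopologicalGroup G] :
    ((∀ x : G, x ≠ 1 → ∃ χ : PontryaginDual G, χ x ≠ 1) ↔
      (∀ H : Subgroup G, (H : Set G).Countable → gCl G (H : Set G) = (H : Set G))) ∧
    ((∀ H : Subgroup G, (H : Set G).Countable → gCl G (H : Set G) = (H : Set G)) ↔
      (∀ x : G, gCl G (Subgroup.zpowers x : Set G) = (Subgroup.zpowers x : Set G))) := by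
  constructor
  · constructor
    · intro hmap H hc
      exact GClosed.gClosed_of_map hmap H hc
    · intro h
      exact GClosed.map_of_bot_gClosed (h ⊥ GClosed.bot_countable)
  · constructor
    · intro h x
      exact h (Subgroup.zpowers x) (GClosed.zpowers_countable x)
    · intro h H hc
      apply GClosed.gClosed_of_map ?_ H hc
      apply GClosed.map_of_bot_gClosed
      have h1 := h 1
      rwa [Subgroup.zpowers_one_eq_bot] at h1
end

section
/- Let T be a continuity type, f its associated closure operator, and G an abelian topological group. Then the von Neumann radical n(G) = ⋂_{x ∈ G^} ker x is contained in f_G({0}). Moreover, if every principal ultrafilter on G^ belongs to T(G^), then n(G) = f_G({0}). -/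
open Filter Topology Set

/-- `z_F(G)`: elements of `G`, viewed as characters of the dual, that send `F` to `1`. -/
def zE (G : Type) [Monoid G] [TopologicalSpace G] (F : Filter (PontryaginDual G)) : Set G :=
  {χ : G | Filter.Tendsto (fun a : PontryaginDual G => a χ) F (nhds 1)}

/-- A continuity type: an assignment, to every abelian topological group, of a collection of
filter(-base)s on it, functorial with respect to continuous homomorphisms. -/
structure ContinuityType : Type 1 where
  T : ∀ (G : Type) [CommGroup G] (τ : TopologicalSpace G),
        @IsTopologicalGroup G τ _ → Set (Filter G)
  functorial : ∀ (G₁ G₂ : Type) [CommGroup G₁] [CommGroup G₂]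
    (τ₁ : TopologicalSpace G₁) (τ₂ : TopologicalSpace G₂)
    (h₁ : @IsTopologicalGroup G₁ τ₁ _) (h₂ : @IsTopologicalGroup G₂ τ₂ _)
    (φ : G₁ →* G₂), Continuous[τ₁, τ₂] φ →
    ∀ F ∈ T G₁ τ₁ h₁, F.map φ ∈ T G₂ τ₂ h₂

/-- The closure operator associated with a continuity type. -/
def fCl (CT : ContinuityType) (G : Type) [CommGroup G] [TopologicalSpace G]
    [IsTopologicalGroup G] (H : Set G) : Set G :=
  ⋂₀ {S : Set G | ∃ F ∈ CT.T (PontryaginDual G) inferInstance inferInstance,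
      S = zE G F ∧ H ⊆ zE G F}

/-- The von Neumann radical: the common kernel of all continuous characters. -/
def nRad (G : Type) [Monoid G] [TopologicalSpace G] : Set G :=
  {g : G | ∀ χ : PontryaginDual G, χ g = 1}

theorem nRad_and_fCl_bot (CT : ContinuityType) (G : Type) [CommGroup G] [TopologicalSpace G]
    [IsTopologicalGroup G] :
    nRad G ⊆ fCl CT G {1} ∧
    ((∀ x : PontryaginDual G, (pure x : Filter (PontryaginDual G)) ∈
        CT.T (PontryaginDual G) inferInstance inferInstance) →
      nRad G = fCl CT G {1}) := by
  have hsub : nRad G ⊆ fCl CT G {1} := by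
    intro g hg S hS
    obtain ⟨F, _hF, rfl, _⟩ := hS
    have : (fun a : PontryaginDual G => a g) = fun _ => (1 : Circle) := by
      funext a; exact hg a
    simp only [zE, Set.mem_setOf_eq, this]
    exact tendsto_const_nhds
  refine ⟨hsub, fun hpure => Set.Subset.antisymm hsub ?_⟩
  intro g hg χ
  have hmem : zE G (pure χ) ∈ {S : Set G | ∃ F ∈ CT.T (PontryaginDual G) inferInstance
      inferInstance, S = zE G F ∧ ({1} : Set G) ⊆ zE G F} := by
    refine ⟨pure χ, hpure χ, rfl, ?_⟩
    intro x hx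
    simp only [Set.mem_singleton_iff] at hx
    subst hx
    simp only [zE, Set.mem_setOf_eq, map_one]
    exact tendsto_const_nhds
  have h := hg _ hmem
  simp only [zE, Set.mem_setOf_eq] at h
  exact tendsto_nhds_unique (tendsto_pure_nhds (fun a : PontryaginDual G => a g) χ) h
end

section
/- Let T be a continuity type, f its associated closure operator, G an abelian topological group, and N ≤ G a T-dually embedded subgroup. Then f_N(H) = N ∩ f_G(H) for every subgroup H ≤ N. -/
open Filter Topology Set

/-- The inclusion of a subgroup as a continuous homomorphism. -/
def inclCHM (G : Type) [CommGroup G] [TopologicalSpace G] (N : Subgroup G) :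
    ContinuousMonoidHom N G := ⟨N.subtype, continuous_subtype_val⟩

theorem fCl_T_dually_embedded (CT : ContinuityType) (G : Type) [CommGroup G] [TopologicalSpace G]
    [IsTopologicalGroup G] (N : Subgroup G)
    (hde : ∀ F₂ ∈ CT.T (PontryaginDual ↥N) inferInstance inferInstance,
      ∃ F₁ ∈ CT.T (PontryaginDual G) inferInstance inferInstance,
        F₁.map ⇑(PontryaginDual.map (inclCHM G N)) = F₂)
    (H : Subgroup G) (hHN : H ≤ N) :
    fCl CT ↥N {x : ↥N | (x : G) ∈ H} = {x : ↥N | (x : G) ∈ fCl CT G (H : Set G)} := by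
  have key : ∀ (F₁ : Filter (PontryaginDual G)) (y : ↥N),
      y ∈ zE ↥N (F₁.map ⇑(PontryaginDual.map (inclCHM G N))) ↔ (y : G) ∈ zE G F₁ := by
    intro F₁ y
    simp only [zE, Set.mem_setOf_eq, Filter.tendsto_map'_iff]
    rfl
  ext x
  simp only [fCl, Set.mem_sInter, Set.mem_setOf_eq]
  constructor
  · intro hx S hS
    obtain ⟨F₁, hF₁, rfl, hsub⟩ := hS
    have hF₂ : (F₁.map ⇑(PontryaginDual.map (inclCHM G N))) ∈
        CT.T (PontryaginDual ↥N) inferInstance inferInstance :=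
      CT.functorial _ _ _ _ _ _ (PontryaginDual.map (inclCHM G N)).toMonoidHom
        (PontryaginDual.map (inclCHM G N)).continuous F₁ hF₁
    have hmem := hx (zE ↥N (F₁.map ⇑(PontryaginDual.map (inclCHM G N))))
      ⟨_, hF₂, rfl, fun y hy => (key F₁ y).2 (hsub hy)⟩
    exact (key F₁ x).1 hmem
  · intro hx S hS
    obtain ⟨F₂, hF₂, rfl, hsub⟩ := hS
    obtain ⟨F₁, hF₁, rfl⟩ := hde F₂ hF₂
    refine (key F₁ x).2 ?_
    refine hx (zE G F₁) ⟨F₁, hF₁, rfl, ?_⟩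
    intro g hg
    exact (key F₁ ⟨g, hHN hg⟩).1 (hsub hg)
end

section
/- Let K be a compact Hausdorff abelian group with dual A, let H ≤ K, and let T be a regular continuity type with associated closure operator f. Then f_K(H) equals the set of χ ∈ K such that χ : (A, τ_H) → T is T-continuous, where τ_H is the initial topology on A induced by the characters in H. -/
open Filter Topology Set

theorem discreteTG (G : Type) [CommGroup G] : @IsTopologicalGroup G ⊥ _ := by
  letI : TopologicalSpace G := ⊥
  haveI : DiscreteTopology G := ⟨rfl⟩
  exact { toContinuousMul := inferInstance, toContinuousInv := inferInstance }

/-- A continuity type is regular if it does not depend on the topology of the group. -/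
def ContinuityType.Regular (CT : ContinuityType) : Prop :=
  ∀ (G : Type) [CommGroup G] (τ : TopologicalSpace G) (h : @IsTopologicalGroup G τ _),
    CT.T G τ h = CT.T G ⊥ (discreteTG G)

/-- `T`-continuity of a (not necessarily continuous) map between topological groups. -/
def TCont (CT : ContinuityType) (G₁ : Type) [CommGroup G₁] (τ₁ : TopologicalSpace G₁)
    (h₁ : @IsTopologicalGroup G₁ τ₁ _) (G₂ : Type) [Group G₂] (τ₂ : TopologicalSpace G₂)
    (φ : G₁ → G₂) : Prop :=
  ∀ F ∈ CT.T G₁ τ₁ h₁, F ≤ @nhds G₁ τ₁ 1 → F.map φ ≤ @nhds G₂ τ₂ 1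

/-- `τ_H`: the initial topology on the dual of `K` induced by evaluation at members of `H ⊆ K`. -/
noncomputable def tauH (K : Type) [Monoid K] [TopologicalSpace K] (H : Set K) :
    TopologicalSpace (PontryaginDual K) :=
  ⨅ χ ∈ H, TopologicalSpace.induced (fun a : PontryaginDual K => a χ) inferInstance

/-- Evaluation at `χ ∈ K` as a homomorphism on the dual. -/
noncomputable def evalHom (K : Type) [CommGroup K] [TopologicalSpace K] (χ : K) :
    PontryaginDual K →* Circle where
  toFun a := a χ
  map_one' := rfl
  map_mul' _ _ := rfl

theorem tauH_tg (K : Type) [CommGroup K] [TopologicalSpace K] (H : Set K) :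
    @IsTopologicalGroup (PontryaginDual K) (tauH K H) _ := by
  apply topologicalGroup_iInf
  intro χ
  apply topologicalGroup_iInf
  intro _
  exact topologicalGroup_induced (evalHom K χ)


theorem le_nhds_tauH_iff (K : Type) [Monoid K] [TopologicalSpace K] (H : Set K)
    (F : Filter (PontryaginDual K)) :
    F ≤ @nhds _ (tauH K H) 1 ↔ H ⊆ zE K F := by
  rw [tauH, _root_.nhds_iInf]
  simp only [_root_.nhds_iInf, le_iInf_iff]
  constructor
  · intro h χ hχ
    have := h χ hχ
    rw [nhds_induced] at this
    exact tendsto_iff_comap.2 this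
  · intro h χ hχ
    rw [nhds_induced]
    exact tendsto_iff_comap.1 (h hχ)

theorem fCl_eq_TCont_characters (CT : ContinuityType) (hreg : CT.Regular)
    (K : Type) [CommGroup K] [TopologicalSpace K] [IsTopologicalGroup K]
    [CompactSpace K] [T2Space K] (H : Subgroup K) :
    fCl CT K (H : Set K) =
      {χ : K | TCont CT (PontryaginDual K) (tauH K (H : Set K)) (tauH_tg K (H : Set K))
        Circle inferInstance (fun a : PontryaginDual K => a χ)} := by
  ext χ
  simp only [fCl, Set.mem_sInter, Set.mem_setOf_eq, TCont]
  constructor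
  · intro hχ F hF hle
    rw [hreg _ (tauH K (H : Set K)) (tauH_tg K (H : Set K)),
      ← hreg _ _ inferInstance] at hF
    exact hχ _ ⟨F, hF, rfl, (le_nhds_tauH_iff K (H : Set K) F).1 hle⟩
  · rintro hχ S ⟨F, hF, rfl, hH⟩
    rw [hreg _ _ inferInstance,
      ← hreg _ (tauH K (H : Set K)) (tauH_tg K (H : Set K))] at hF
    exact hχ F hF ((le_nhds_tauH_iff K (H : Set K) F).2 hH)
end

section
/- Let A, B be discrete abelian groups with duals K = A^, C = B^, let H ≤ K, L ≤ C, and let T be a regular continuity type with closure operator f. For a homomorphism φ : A → B, the following are equivalent: (i) φ : (A, τ_H) → (B, τ_L) is T-continuous; (ii) χ ∘ φ is T-continuous on (A, τ_H) for every T-continuous character χ of (B, τ_L); (iii) φ : (A, τ_{f_K(H)}) → (B, τ_{f_C(L)}) is continuous. -/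
open Filter Topology Set

/-- `τ_L`: the initial topology on `A` induced by a set `L` of characters of `A`. -/
noncomputable def tauD (A : Type) [Monoid A] [TopologicalSpace A] (L : Set (PontryaginDual A)) :
    TopologicalSpace A :=
  ⨅ χ ∈ L, TopologicalSpace.induced (fun a : A => χ a) inferInstance

theorem tauD_tg (A : Type) [CommGroup A] [TopologicalSpace A] [IsTopologicalGroup A]
    (L : Set (PontryaginDual A)) : @IsTopologicalGroup A (tauD A L) _ := by
  apply topologicalGroup_iInf
  intro χ
  apply topologicalGroup_iInf
  intro _
  exact topologicalGroup_induced χ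

/-- `z_F(Â)` for a filter `F` on `A`: characters of `A` sending `F` to `1`. -/
def zD (A : Type) [Monoid A] [TopologicalSpace A] (F : Filter A) : Set (PontryaginDual A) :=
  {χ : PontryaginDual A | Filter.Tendsto (fun a : A => χ a) F (nhds 1)}

/-- The closure operator associated with `CT` on subgroups of the dual of a discrete group `A`. -/
def fD (CT : ContinuityType) (A : Type) [CommGroup A] [TopologicalSpace A] [IsTopologicalGroup A]
    (H : Set (PontryaginDual A)) : Set (PontryaginDual A) :=
  ⋂₀ {S : Set (PontryaginDual A) | ∃ F ∈ CT.T A inferInstance inferInstance,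
      S = zD A F ∧ H ⊆ zD A F}


lemma cont_tauD {A : Type} [CommGroup A] [TopologicalSpace A]
    {S : Set (PontryaginDual A)} {χ : PontryaginDual A} (hχ : χ ∈ S) :
    Continuous[tauD A S, _] (fun a : A => χ a) :=
  continuous_iInf_dom (i := χ) (continuous_iInf_dom (i := hχ) continuous_induced_dom)

lemma le_nhds_tauD (A : Type) [CommGroup A] [TopologicalSpace A]
    (S : Set (PontryaginDual A)) (F : Filter A) :
    F ≤ @nhds A (tauD A S) 1 ↔ S ⊆ zD A F := by
  constructor
  · intro h χ hχ
    have h2 := @Continuous.tendsto A Circle (tauD A S) _ _ (cont_tauD hχ) 1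
    rw [map_one] at h2
    exact h2.mono_left h
  · intro h
    unfold tauD; simp only [_root_.nhds_iInf, le_iInf_iff]
    intro χ hχ
    rw [nhds_induced]
    simp only [map_one]
    exact Filter.tendsto_iff_comap.mp (h hχ)

lemma cont_into_tauD {A B : Type} [CommGroup A] [CommGroup B] [TopologicalSpace A]
    [TopologicalSpace B] (τ : TopologicalSpace A) (S : Set (PontryaginDual B)) (f : A → B) :
    Continuous[τ, tauD B S] f ↔ ∀ χ ∈ S, Continuous[τ, _] (fun a : A => χ (f a)) := by
  unfold tauD; simp only [continuous_iInf_rng, continuous_induced_rng, Function.comp_def]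

lemma Treg (CT : ContinuityType) (hreg : CT.Regular) (G : Type) [CommGroup G]
    (τ₁ τ₂ : TopologicalSpace G) (h₁ : @IsTopologicalGroup G τ₁ _)
    (h₂ : @IsTopologicalGroup G τ₂ _) : CT.T G τ₁ h₁ = CT.T G τ₂ h₂ := by
  rw [hreg G τ₁ h₁, hreg G τ₂ h₂]

lemma subset_fD (CT : ContinuityType) (A : Type) [CommGroup A] [TopologicalSpace A]
    [IsTopologicalGroup A] (H : Set (PontryaginDual A)) : H ⊆ fD CT A H := by
  intro χ hχ S hS
  obtain ⟨F, _, rfl, hHF⟩ := hS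
  exact hHF hχ

theorem TCont_tfae (CT : ContinuityType) (hreg : CT.Regular) (A B : Type)
    [CommGroup A] [CommGroup B] [TopologicalSpace A] [TopologicalSpace B]
    [DiscreteTopology A] [DiscreteTopology B] [IsTopologicalGroup A] [IsTopologicalGroup B]
    (H : Subgroup (PontryaginDual A)) (L : Subgroup (PontryaginDual B)) (φ : A →* B) :
    (TCont CT A (tauD A (H : Set (PontryaginDual A))) (tauD_tg A (H : Set (PontryaginDual A)))
        B (tauD B (L : Set (PontryaginDual B))) ⇑φ ↔
      ∀ χ : B →* Circle,
        TCont CT B (tauD B (L : Set (PontryaginDual B))) (tauD_tg B (L : Set (PontryaginDual B)))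
          Circle inferInstance ⇑χ →
        TCont CT A (tauD A (H : Set (PontryaginDual A))) (tauD_tg A (H : Set (PontryaginDual A)))
          Circle inferInstance (⇑χ ∘ ⇑φ)) ∧
    ((∀ χ : B →* Circle,
        TCont CT B (tauD B (L : Set (PontryaginDual B))) (tauD_tg B (L : Set (PontryaginDual B)))
          Circle inferInstance ⇑χ →
        TCont CT A (tauD A (H : Set (PontryaginDual A))) (tauD_tg A (H : Set (PontryaginDual A)))
          Circle inferInstance (⇑χ ∘ ⇑φ)) ↔
      Continuous[tauD A (fD CT A (H : Set (PontryaginDual A))),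
        tauD B (fD CT B (L : Set (PontryaginDual B)))] ⇑φ) := by
  set HS := (H : Set (PontryaginDual A))
  set LS := (L : Set (PontryaginDual B))
  -- (iii) → (i)
  have h31 : Continuous[tauD A (fD CT A HS), tauD B (fD CT B LS)] ⇑φ →
      TCont CT A (tauD A HS) (tauD_tg A HS) B (tauD B LS) ⇑φ := by
    intro h3 F hF hFle
    rw [le_nhds_tauD] at hFle
    have hF' : F ∈ CT.T A ‹TopologicalSpace A› inferInstance := by
      rw [Treg CT hreg A _ (tauD A HS) inferInstance (tauD_tg A HS)]
      exact hF
    have hfH : fD CT A HS ⊆ zD A F := by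
      intro χ hχ
      exact hχ (zD A F) ⟨F, hF', rfl, hFle⟩
    have hFle' : F ≤ @nhds A (tauD A (fD CT A HS)) 1 := (le_nhds_tauD A _ F).mpr hfH
    have hmap : F.map ⇑φ ≤ @nhds B (tauD B (fD CT B LS)) 1 := by
      have := @Continuous.tendsto A B (tauD A (fD CT A HS)) (tauD B (fD CT B LS)) _ h3 1
      rw [map_one] at this
      exact (Filter.map_mono hFle').trans this
    rw [le_nhds_tauD] at hmap ⊢
    exact (subset_fD CT B LS).trans hmap
  -- (i) → (ii)
  have h12 : TCont CT A (tauD A HS) (tauD_tg A HS) B (tauD B LS) ⇑φ →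
      ∀ χ : B →* Circle,
        TCont CT B (tauD B LS) (tauD_tg B LS) Circle inferInstance ⇑χ →
        TCont CT A (tauD A HS) (tauD_tg A HS) Circle inferInstance (⇑χ ∘ ⇑φ) := by
    intro h1 χ hχ F hF hFle
    have hFbot : F ∈ CT.T A ⊥ (discreteTG A) := by
      rw [← Treg CT hreg A (tauD A HS) ⊥ (tauD_tg A HS) (discreteTG A)]
      exact hF
    have hG : F.map ⇑φ ∈ CT.T B (tauD B LS) (tauD_tg B LS) := by
      rw [Treg CT hreg B (tauD B LS) ⊥ (tauD_tg B LS) (discreteTG B)]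
      exact CT.functorial A B ⊥ ⊥ (discreteTG A) (discreteTG B) φ continuous_bot F hFbot
    have hGle : F.map ⇑φ ≤ @nhds B (tauD B LS) 1 := h1 F hF hFle
    have := hχ (F.map ⇑φ) hG hGle
    rwa [Filter.map_map] at this
  -- (ii) → (iii)
  have h23 : (∀ χ : B →* Circle,
        TCont CT B (tauD B LS) (tauD_tg B LS) Circle inferInstance ⇑χ →
        TCont CT A (tauD A HS) (tauD_tg A HS) Circle inferInstance (⇑χ ∘ ⇑φ)) →
      Continuous[tauD A (fD CT A HS), tauD B (fD CT B LS)] ⇑φ := by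
    intro h2
    rw [cont_into_tauD]
    intro χ₀ hχ₀
    -- χ₀ ∘ φ as a character of A
    set ψ : PontryaginDual A :=
      ⟨(χ₀ : B →* Circle).comp φ, continuous_of_discreteTopology⟩ with hψdef
    have hψ : ψ ∈ fD CT A HS := by
      intro S hS
      obtain ⟨F, hFT, rfl, hHF⟩ := hS
      -- need: Tendsto (χ₀ ∘ φ) F (𝓝 1)
      have hχ₀T : TCont CT B (tauD B LS) (tauD_tg B LS) Circle inferInstance
          ⇑(χ₀ : B →* Circle) := by
        intro G hG hGle
        rw [le_nhds_tauD] at hGle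
        have hG' : G ∈ CT.T B ‹TopologicalSpace B› inferInstance := by
          rw [Treg CT hreg B _ (tauD B LS) inferInstance (tauD_tg B LS)]
          exact hG
        exact hχ₀ (zD B G) ⟨G, hG', rfl, hGle⟩
      have hFT' : F ∈ CT.T A (tauD A HS) (tauD_tg A HS) := by
        rw [Treg CT hreg A (tauD A HS) ‹TopologicalSpace A› (tauD_tg A HS) inferInstance]
        exact hFT
      have hFle : F ≤ @nhds A (tauD A HS) 1 := (le_nhds_tauD A HS F).mpr hHF
      exact h2 (χ₀ : B →* Circle) hχ₀T F hFT' hFle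
    exact cont_tauD hψ
  exact ⟨⟨h12, fun h2 => h31 (h23 h2)⟩, ⟨h23, fun h3 => h12 (h31 h3)⟩⟩
end

section
/- A group homomorphism φ : G₁ → G₂ between topological groups is C-continuous (i.e., for every filter-base F on G₁ containing a countable set, F → e implies φ(F) → e) if and only if φ is countably continuous (i.e., the restriction of φ to every countable subset of G₁ is continuous). -/
open Filter Topology Set

theorem Ccont_iff_countablyContinuous (G₁ G₂ : Type) [Group G₁] [Group G₂]
    [TopologicalSpace G₁] [TopologicalSpace G₂] [IsTopologicalGroup G₁] [IsTopologicalGroup G₂]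
    (φ : G₁ →* G₂) :
    (∀ F : Filter G₁, (∃ D ∈ F, D.Countable) → F ≤ nhds 1 → F.map ⇑φ ≤ nhds 1) ↔
    (∀ D : Set G₁, D.Countable → Continuous fun x : D => φ ↑x) := by
  constructor
  · intro h D hD
    suffices hco : ContinuousOn (⇑φ) D by
      exact continuousOn_iff_continuous_restrict.mp hco
    intro d hd
    have key : Filter.map ⇑φ (Filter.map (fun x => d⁻¹ * x) (𝓝[D] d)) ≤ 𝓝 1 := by
      apply h
      · exact ⟨(fun x => d⁻¹ * x) '' D, Filter.image_mem_map (self_mem_nhdsWithin),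
          hD.image _⟩
      · have : Filter.Tendsto (fun x => d⁻¹ * x) (𝓝 d) (𝓝 1) := by
          have := (tendsto_id : Filter.Tendsto id (𝓝 d) (𝓝 d)).const_mul d⁻¹
          simpa using this
        exact (this.mono_left nhdsWithin_le_nhds)
    have key2 : Filter.Tendsto (fun x => (φ d)⁻¹ * φ x) (𝓝[D] d) (𝓝 1) := by
      rw [Filter.map_map] at key
      have : (⇑φ ∘ fun x => d⁻¹ * x) = fun x => (φ d)⁻¹ * φ x := by
        funext x; simp
      rwa [this] at key
    have key3 : Filter.Tendsto (fun x => φ d * ((φ d)⁻¹ * φ x)) (𝓝[D] d) (𝓝 (φ d)) := by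
      have hmul : Filter.Tendsto (fun y => φ d * y) (𝓝 1) (𝓝 (φ d)) := by
        have := (tendsto_id : Filter.Tendsto id (𝓝 (1:G₂)) (𝓝 1)).const_mul (φ d)
        simpa using this
      exact hmul.comp key2
    have : (fun x => φ d * ((φ d)⁻¹ * φ x)) = fun x => φ x := by
      funext x; group
    rwa [this] at key3
  · intro h F ⟨D, hDF, hD⟩ hF
    have hc := h (insert 1 D) (hD.insert 1)
    have hc' : ContinuousOn (⇑φ) (insert 1 D) := continuousOn_iff_continuous_restrict.mpr hc
    have h1 := hc' 1 (mem_insert 1 D)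
    have : Filter.Tendsto ⇑φ (𝓝[insert 1 D] 1) (𝓝 1) := by
      rw [show (1:G₂) = φ 1 by simp]; exact h1
    refine le_trans ?_ this
    apply Filter.map_mono
    rw [nhdsWithin]
    exact le_inf hF (le_principal_iff.mpr (Filter.mem_of_superset hDF (subset_insert 1 D)))
end

section
/- Let K be a compact Hausdorff abelian group with dual A and H ≤ K. Then H is g-dense in K (g_K(H) = K) if and only if the precompact group (A, τ_H) has no non-trivial convergent sequences. -/
open Filter Topology Set

lemma tendsto_tauH_iff {K : Type} [Monoid K] [TopologicalSpace K] (H : Set K)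
    (a : ℕ → PontryaginDual K) (a₀ : PontryaginDual K) :
    Filter.Tendsto a Filter.atTop (@nhds _ (tauH K H) a₀) ↔
      ∀ χ ∈ H, Filter.Tendsto (fun n => a n χ) Filter.atTop (nhds (a₀ χ)) := by
  rw [tauH]
  simp only [tauH, _root_.nhds_iInf, nhds_induced, tendsto_iInf, tendsto_comap_iff, Function.comp_def]

open MeasureTheory in
/-- Integral of a nontrivial character over Haar measure vanishes. -/
lemma integral_char_eq_zero {K : Type} [CommGroup K] [TopologicalSpace K]
    [IsTopologicalGroup K] [MeasurableSpace K] [BorelSpace K]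
    (μ : Measure K) [μ.IsMulLeftInvariant] (χ : PontryaginDual K) (hχ : χ ≠ 1)
    (hi : Integrable (fun x => (χ x : ℂ)) μ) :
    ∫ x, (χ x : ℂ) ∂μ = 0 := by
  obtain ⟨g, hg⟩ : ∃ g, χ g ≠ 1 := by
    by_contra h
    push_neg at h
    exact hχ (ContinuousMonoidHom.ext fun x => h x)
  have h1 : ∫ x, (χ (g * x) : ℂ) ∂μ = ∫ x, (χ x : ℂ) ∂μ :=
    integral_mul_left_eq_self (fun x => (χ x : ℂ)) g
  have h2 : ∀ x, (χ (g * x) : ℂ) = (χ g : ℂ) * (χ x : ℂ) := by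
    intro x; rw [map_mul, Circle.coe_mul]
  simp_rw [h2] at h1
  rw [integral_const_mul] at h1
  have h3 : ((χ g : ℂ) - 1) * ∫ x, (χ x : ℂ) ∂μ = 0 := by linear_combination h1
  rcases mul_eq_zero.1 h3 with h | h
  · exact absurd (Circle.coe_eq_one.1 (sub_eq_zero.1 h)) hg
  · exact h

open MeasureTheory in
/-- Flor's theorem: a sequence of characters of a compact group converging
pointwise to `1` is eventually `1`. -/
lemma eventually_eq_one_of_tendsto_one (K : Type) [CommGroup K] [TopologicalSpace K]
    [IsTopologicalGroup K] [CompactSpace K] [T2Space K] (u : ℕ → PontryaginDual K)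
    (h : ∀ x : K, Filter.Tendsto (fun n => u n x) Filter.atTop (nhds 1)) :
    ∀ᶠ n in Filter.atTop, u n = 1 := by
  borelize K
  let μ : Measure K := Measure.haar
  have hcont : ∀ χ : PontryaginDual K, Continuous (fun x : K => (χ x : ℂ)) := fun χ =>
    continuous_subtype_val.comp (map_continuous χ)
  have hint : ∀ χ : PontryaginDual K, Integrable (fun x : K => (χ x : ℂ)) μ := fun χ =>
    (hcont χ).integrable_of_hasCompactSupport (HasCompactSupport.of_compactSpace _)
  -- dominated convergence
  have hDCT : Filter.Tendsto (fun n => ∫ x, (u n x : ℂ) ∂μ) Filter.atTop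
      (nhds (∫ _x, (1 : ℂ) ∂μ)) := by
    apply tendsto_integral_of_dominated_convergence (fun _ => (1 : ℝ))
    · exact fun n => (hcont (u n)).aestronglyMeasurable
    · exact integrable_const 1
    · intro n
      filter_upwards with x
      exact le_of_eq (Circle.norm_coe _)
    · filter_upwards with x
      have : Filter.Tendsto (fun z : Circle => (z : ℂ)) (nhds 1) (nhds ((1 : Circle) : ℂ)) :=
        continuous_subtype_val.tendsto 1
      exact this.comp (h x)
  rw [integral_const] at hDCT
  set c : ℝ := (μ univ).toReal with hc
  have hcpos : 0 < c := by
    have h0 : μ univ ≠ 0 := by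
      simpa using (isOpen_univ.measure_ne_zero μ (univ_nonempty))
    have hfin : μ univ ≠ ⊤ := measure_ne_top μ univ
    exact ENNReal.toReal_pos h0 hfin
  have hev : ∀ᶠ n in Filter.atTop, dist (∫ x, (u n x : ℂ) ∂μ) (c • (1 : ℂ)) < c :=
    Metric.tendsto_nhds.1 hDCT c hcpos
  filter_upwards [hev] with n hn
  by_contra hne
  rw [integral_char_eq_zero μ (u n) hne (hint (u n))] at hn
  rw [dist_zero_left, norm_smul, norm_one, mul_one, Real.norm_eq_abs, abs_of_pos hcpos] at hn
  exact lt_irrefl c hn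

theorem gDense_iff_no_nontrivial_convergent_sequences (K : Type) [CommGroup K]
    [TopologicalSpace K] [IsTopologicalGroup K] [CompactSpace K] [T2Space K] (H : Subgroup K) :
    gCl K (H : Set K) = Set.univ ↔
      ∀ (a : ℕ → PontryaginDual K) (a₀ : PontryaginDual K),
        Filter.Tendsto a Filter.atTop (@nhds _ (tauH K (H : Set K)) a₀) →
        ∃ c, ∀ᶠ n in Filter.atTop, a n = c := by
  constructor
  · intro hg a a₀ ha
    rw [tendsto_tauH_iff] at ha
    set u : ℕ → PontryaginDual K := fun n => a n * a₀⁻¹ with hu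
    have hH : (H : Set K) ⊆ sSeq K u := by
      intro x hx
      have hx' := ha x hx
      have : Filter.Tendsto (fun n => a n x * (a₀ x)⁻¹) Filter.atTop
          (nhds (a₀ x * (a₀ x)⁻¹)) := hx'.mul tendsto_const_nhds
      rw [mul_inv_cancel] at this
      exact this
    have hall : ∀ x : K, Filter.Tendsto (fun n => u n x) Filter.atTop (nhds 1) := by
      intro x
      have hx : x ∈ gCl K (H : Set K) := hg ▸ mem_univ x
      exact hx (sSeq K u) ⟨u, rfl, hH⟩
    have hev := eventually_eq_one_of_tendsto_one K u hall
    refine ⟨a₀, ?_⟩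
    filter_upwards [hev] with n hn
    have : a n * a₀⁻¹ = 1 := hn
    calc a n = a n * a₀⁻¹ * a₀ := by group
    _ = a₀ := by rw [this, one_mul]
  · intro hyp
    ext x
    simp only [mem_univ, iff_true, gCl, mem_sInter]
    rintro S ⟨u, rfl, hH⟩
    -- u tends to 1 in τ_H
    have hu1 : Filter.Tendsto u Filter.atTop (@nhds _ (tauH K (H : Set K)) 1) := by
      rw [tendsto_tauH_iff]
      intro χ hχ
      exact hH hχ
    obtain ⟨c, hc⟩ := hyp u 1 hu1
    -- c annihilates H
    have hcH : ∀ χ ∈ (H : Set K), c χ = 1 := by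
      intro χ hχ
      have h1 : Filter.Tendsto (fun n => u n χ) Filter.atTop (nhds 1) := hH hχ
      have h2 : Filter.Tendsto (fun n => u n χ) Filter.atTop (nhds (c χ)) := by
        refine tendsto_const_nhds.congr' ?_
        filter_upwards [hc] with n hn using (by rw [hn])
      exact (tendsto_nhds_unique h2 h1)
    -- alternating sequence forces c = 1
    have hc1 : c = 1 := by
      set v : ℕ → PontryaginDual K := fun n => if Even n then 1 else c with hv
      have hv1 : Filter.Tendsto v Filter.atTop (@nhds _ (tauH K (H : Set K)) 1) := by
        rw [tendsto_tauH_iff]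
        intro χ hχ
        have h1 : ((1 : PontryaginDual K) χ) = 1 := rfl
        rw [h1]
        have : ∀ n, v n χ = 1 := by
          intro n
          by_cases hn : Even n <;> simp [hv, hn, hcH χ hχ, h1]
        exact tendsto_const_nhds.congr fun n => (this n).symm
      obtain ⟨d, hd⟩ := hyp v 1 hv1
      rw [eventually_atTop] at hd
      obtain ⟨N, hN⟩ := hd
      have e1 : v (2 * N) = 1 := if_pos (even_two_mul N)
      have e2 : v (2 * N + 1) = c := if_neg (by simp [Nat.even_add_one, even_two_mul])
      have hd1 : d = 1 := (hN (2 * N) (by omega)).symm.trans e1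
      have hdc : d = c := (hN (2 * N + 1) (by omega)).symm.trans e2
      exact hdc.symm.trans hd1
    -- conclude
    show x ∈ sSeq K u
    have h1 : ∀ᶠ n in Filter.atTop, u n x = 1 := by
      filter_upwards [hc] with n hn
      rw [hn, hc1]
      rfl
    exact Filter.Tendsto.congr' (h1.mono fun n hn => hn.symm) tendsto_const_nhds
end
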